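/- Generating function for the q-Laguerre polynomials 𝓛^{(α)}_j(·|q²): for every real α > −1 and all reals r, t > 0 with rt < 1/(1−q), the series ∑_{j=0}^∞ 𝓛^{(α)}_j(r²/(1+q)|q²) / Γ_{q²}(α+j+1) · t^{2j}/(1+q)^j converges absolutely and J^{(1)}_α(rt|q²) = (rt/(1+q))^α · [ ∑_{j=0}^∞ 𝓛^{(α)}_j(r²/(1+q)|q²) / Γ_{q²}(α+j+1) · t^{2j}/(1+q)^j ] · e_{q²}(−q²t²/(1+q)). -/

import Mathlib

/-!
Up to the factor `(rt/(1+q))^α`, `J^{(1)}_α(rt|q²)` is the power series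
`∑ᵢ (-1)^i (rt/(1+q))^{2i} / ([i]_{q²}! Γ_{q²}(i+α+1))`, and
`E_{q²}(q²t²/(1+q)) = ∑ₖ q^{k(k+1)} (t²/(1+q))^k / [k]_{q²}!`.
Both converge absolutely by the ratio test, and the `j`-th coefficient of their Cauchy product is
the `j`-th term of the Laguerre series: writing the Pochhammer symbol through the functional
equation of `Γ_{q²}`, `(q^{2x}; q²)_n = Γ_{q²}(x+n) (1-q²)^n / Γ_{q²}(x)`, the factors
`Γ_{q²}(α+i+1)` cancel. Dividing by `E_{q²} > 0` gives the identity. The functional equation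
itself comes from `Γ_Q(x) = (1-Q)^{1-x} (Q;Q)_∞ / (Q^x;Q)_∞`.
-/

open scoped BigOperators

noncomputable section

/-- The q-number `[u]_q = (q^u - 1)/(q - 1)`. -/
def qNum (q u : ℝ) : ℝ := (q ^ u - 1) / (q - 1)

/-- The q-factorial `[n]_q! = ∏_{i=1}^n [i]_q`. -/
def qFact (q : ℝ) (n : ℕ) : ℝ := ∏ i ∈ Finset.range n, qNum q ((i : ℝ) + 1)

/-- The q-Gamma function `Γ_q(t) = (1-q)^{1-t} ∏_{k=0}^∞ (1-q^{k+1})/(1-q^{k+t})`. -/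
def qGamma (q t : ℝ) : ℝ :=
  (1 - q) ^ (1 - t) * ∏' k : ℕ, (1 - q ^ (k + 1)) / (1 - q ^ ((k : ℝ) + t))

/-- The q-derivative `∂^q_t f(t) = (f(qt) - f(t))/((q-1)t)`.
The `q⁻¹`-derivative is `qDeriv q⁻¹`. -/
def qDeriv (q : ℝ) (f : ℝ → ℝ) (t : ℝ) : ℝ := (f (q * t) - f t) / ((q - 1) * t)

/-- The q-Pochhammer symbol `(a; q)_k = ∏_{l=0}^{k-1} (1 - a q^l)`. -/
def qPoch (a q : ℝ) (k : ℕ) : ℝ := ∏ l ∈ Finset.range k, (1 - a * q ^ l)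

/-- The q-exponential `E_q(t) = ∑_{j=0}^∞ q^{j(j-1)/2} t^j/[j]_q!`. -/
def qExpE (q t : ℝ) : ℝ := ∑' j : ℕ, q ^ (j * (j - 1) / 2) * t ^ j / qFact q j

/-- `e_q(-u) := 1/E_q(u)` (intended for `u ≥ 0`); `qExpe q u` denotes `e_q(-u)`. -/
def qExpe (q u : ℝ) : ℝ := (qExpE q u)⁻¹

/-- The first q-Bessel function `J^{(1)}_ν(x|q²)`. -/
def qBessel1 (q ν x : ℝ) : ℝ :=
  (x / (1 + q)) ^ ν *
    ∑' i : ℕ, (-1 : ℝ) ^ i / (qFact (q ^ 2) i * qGamma (q ^ 2) ((i : ℝ) + ν + 1)) *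
      (x / (1 + q)) ^ (2 * i)

/-- The second q-Bessel function `J^{(2)}_ν(x|q²)`. -/
def qBessel2 (q ν x : ℝ) : ℝ :=
  q ^ (ν ^ 2) * (x / (1 + q)) ^ ν *
    ∑' i : ℕ, q ^ (2 * (i : ℝ) * ((i : ℝ) + ν)) * (-1 : ℝ) ^ i /
        (qFact (q ^ 2) i * qGamma (q ^ 2) ((i : ℝ) + ν + 1)) *
      (x / (1 + q)) ^ (2 * i)

/-- The q-Laguerre polynomial `𝓛^{(α)}_j(u|q²)`. -/
def qLaguerre (q α : ℝ) (j : ℕ) (u : ℝ) : ℝ :=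
  ∑ i ∈ Finset.range (j + 1),
    q ^ ((j - i) * (j - i + 1)) * (-u) ^ i / (qFact (q ^ 2) (j - i) * qFact (q ^ 2) i) *
      (qPoch (q ^ (2 * (i : ℝ) + 2 * α + 2)) (q ^ 2) (j - i) / (1 - q ^ 2) ^ (j - i))

/-- The q-Laguerre polynomial `𝓛^{(α)}_j(u|q^{-2})`. -/
def qLaguerreInv (q α : ℝ) (j : ℕ) (u : ℝ) : ℝ :=
  q ^ (-(j : ℝ) * ((j : ℝ) + 1 + 2 * α)) *
    ∑ i ∈ Finset.range (j + 1),
      q ^ (2 * (i : ℝ) * ((i : ℝ) + α)) * (-u) ^ i / (qFact (q ^ 2) (j - i) * qFact (q ^ 2) i) *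
        (qPoch (q ^ (2 * (i : ℝ) + 2 * α + 2)) (q ^ 2) (j - i) / (1 - q ^ 2) ^ (j - i))

/-- The finite Jackson q-integral `∫_0^a f(t) d_q t = (1-q) a ∑_{k=0}^∞ f(q^k a) q^k`. -/
def jackson (q a : ℝ) (f : ℝ → ℝ) : ℝ := (1 - q) * a * ∑' k : ℕ, f (q ^ k * a) * q ^ k

/-- The infinite Jackson q-integral `∫_0^{γ·∞} f(t) d_q t = (1-q) γ ∑_{k=-∞}^∞ f(q^k γ) q^k`. -/
def jacksonInf (q γ : ℝ) (f : ℝ → ℝ) : ℝ := (1 - q) * γ * ∑' k : ℤ, f (q ^ k * γ) * q ^ k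

/-- The first q-Hankel transform `𝓗̄^{q,β}_ν`. -/
def hankel1 (q μ ν β : ℝ) (f : ℝ → ℝ) (t : ℝ) : ℝ :=
  (1 + q) / μ * jackson q (Real.sqrt (μ / ((1 - q ^ 2) * β)))
    (fun r => qBessel1 q ν ((1 + q) / μ * (r * t)) / (r * t) ^ ν * r ^ (2 * ν + 1) * f r)

/-- The second q-Hankel transform `𝓗^{q,γ}_ν`. -/
def hankel2 (q μ ν γ : ℝ) (f : ℝ → ℝ) (r : ℝ) : ℝ :=
  (1 + q) / μ * jacksonInf q γ
    (fun t => qBessel2 q ν (q * ((1 + q) / μ) * (r * t)) / (r * t) ^ ν * t ^ (2 * ν + 1) * f t)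


open Filter Topology

lemma summable_norm_mul_pow_of_tendsto_ratio {𝕜 : Type*} [NormedField 𝕜] {c : ℕ → 𝕜}
    {L : ℝ} (hc : ∀ n, c n ≠ 0) (h : Tendsto (fun n => ‖c (n + 1)‖ / ‖c n‖) atTop (𝓝 L))
    {w : 𝕜} (hw : L * ‖w‖ < 1) : Summable fun n => ‖c n * w ^ n‖ := by
  obtain ⟨ρ, hLρ, hρ1⟩ := exists_between hw
  refine summable_of_ratio_norm_eventually_le hρ1 ?_
  filter_upwards [(h.mul_const ‖w‖).eventually (gt_mem_nhds hLρ)] with n hn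
  have hcn : 0 < ‖c n‖ := norm_pos_iff.mpr (hc n)
  rw [norm_norm, norm_norm, norm_mul, norm_mul, norm_pow, norm_pow, pow_succ]
  calc ‖c (n + 1)‖ * (‖w‖ ^ n * ‖w‖) = ‖c (n + 1)‖ / ‖c n‖ * ‖w‖ * (‖c n‖ * ‖w‖ ^ n) := by
        field_simp
    _ ≤ ρ * (‖c n‖ * ‖w‖ ^ n) := by gcongr

/-- The infinite q-Pochhammer symbol `(a; q)_∞ = ∏_{k ≥ 0} (1 - a q^k)`. -/
def qPochInf (a q : ℝ) : ℝ := ∏' k : ℕ, (1 - a * q ^ k)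

section qPochInf

variable {q : ℝ}

lemma multipliable_one_sub_mul_pow (hq : |q| < 1) (a : ℝ) :
    Multipliable fun k : ℕ => 1 - a * q ^ k := by
  simpa [sub_eq_add_neg] using Real.multipliable_one_add_of_summable
    ((summable_geometric_of_abs_lt_one hq).mul_left a).neg

lemma qPochInf_eq_qPoch_mul (hq : |q| < 1) (a : ℝ) (n : ℕ) :
    qPochInf a q = qPoch a q n * qPochInf (a * q ^ n) q := by
  have hshift : ∀ k, 1 - a * q ^ (k + n) = 1 - a * q ^ n * q ^ k := fun k => by ring
  have hmul : Multipliable fun k => 1 - a * q ^ (k + n) := by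
    simpa only [hshift] using multipliable_one_sub_mul_pow hq (a * q ^ n)
  have := hmul.prod_mul_tprod_nat_mul' (f := fun k => 1 - a * q ^ k)
  simp only [hshift] at this
  rw [qPochInf, ← this, qPoch, qPochInf]

lemma one_sub_mul_pow_pos (hq0 : 0 ≤ q) (hq1 : q ≤ 1) {a : ℝ} (ha : a < 1) (k : ℕ) :
    0 < 1 - a * q ^ k := by
  have h0 : 0 ≤ q ^ k := pow_nonneg hq0 k
  have h1 : q ^ k ≤ 1 := pow_le_one₀ hq0 hq1
  rcases le_or_gt a 0 with ha0 | ha0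
  · nlinarith
  · nlinarith

lemma qPoch_pos (hq0 : 0 ≤ q) (hq1 : q ≤ 1) {a : ℝ} (ha : a < 1) (n : ℕ) : 0 < qPoch a q n :=
  Finset.prod_pos fun k _ => one_sub_mul_pow_pos hq0 hq1 ha k

lemma qPochInf_pos (hq0 : 0 ≤ q) (hq1 : q < 1) {a : ℝ} (ha : a < 1) : 0 < qPochInf a q := by
  have hfac := one_sub_mul_pow_pos hq0 hq1.le ha
  have hlog : Summable fun k : ℕ => Real.log (1 - a * q ^ k) := by
    simpa [sub_eq_add_neg] using Real.summable_log_one_add_of_summable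
      ((summable_geometric_of_abs_lt_one (abs_lt.mpr ⟨by linarith, hq1⟩)).mul_left a).neg
  rw [qPochInf, ← Real.rexp_tsum_eq_tprod hfac hlog]
  exact Real.exp_pos _

end qPochInf

lemma qFact_succ (Q : ℝ) (n : ℕ) : qFact Q (n + 1) = qFact Q n * qNum Q (n + 1) :=
  Finset.prod_range_succ _ n

lemma qNum_eq_one_sub_div (Q y : ℝ) : qNum Q y = (1 - Q ^ y) / (1 - Q) := by
  rw [qNum, ← neg_div_neg_eq, neg_sub, neg_sub]

section

variable {Q : ℝ} (hQ0 : 0 < Q) (hQ1 : Q < 1)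
include hQ0 hQ1

lemma qNum_pos {y : ℝ} (hy : 0 < y) : 0 < qNum Q y := by
  rw [qNum_eq_one_sub_div]
  exact div_pos (sub_pos.mpr (Real.rpow_lt_one hQ0.le hQ1 hy)) (sub_pos.mpr hQ1)

lemma tendsto_qNum_nat_add (b : ℝ) :
    Tendsto (fun n : ℕ => qNum Q (n + b)) atTop (𝓝 (1 - Q)⁻¹) := by
  have hpow := (tendsto_pow_atTop_nhds_zero_of_lt_one hQ0.le hQ1).const_mul (Q ^ b)
  have h := (hpow.const_sub 1).div_const (1 - Q)
  rw [mul_zero, sub_zero, one_div] at h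
  refine h.congr fun n => ?_
  rw [qNum_eq_one_sub_div, Real.rpow_add hQ0, Real.rpow_natCast, mul_comm]

lemma qFact_pos (n : ℕ) : 0 < qFact Q n :=
  Finset.prod_pos fun i _ => qNum_pos hQ0 hQ1 (by positivity)

lemma qGamma_eq_qPochInf {x : ℝ} (hx : 0 < x) :
    qGamma Q x = (1 - Q) ^ (1 - x) * (qPochInf Q Q / qPochInf (Q ^ x) Q) := by
  have hQ : |Q| < 1 := abs_lt.mpr ⟨by linarith, hQ1⟩
  have hfac : ∀ k : ℕ, (1 - Q ^ (k + 1)) / (1 - Q ^ ((k : ℝ) + x))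
      = (1 - Q * Q ^ k) / (1 - Q ^ x * Q ^ k) := fun k => by
    rw [pow_succ', Real.rpow_add hQ0, Real.rpow_natCast, mul_comm (Q ^ k)]
  rw [qGamma, tprod_congr hfac, Multipliable.tprod_div₀ (multipliable_one_sub_mul_pow hQ Q)
    (multipliable_one_sub_mul_pow hQ (Q ^ x))
    (qPochInf_pos hQ0.le hQ1 (Real.rpow_lt_one hQ0.le hQ1 hx)).ne', qPochInf, qPochInf]

lemma qGamma_pos {x : ℝ} (hx : 0 < x) : 0 < qGamma Q x := by
  rw [qGamma_eq_qPochInf hQ0 hQ1 hx]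
  have := qPochInf_pos hQ0.le hQ1 hQ1
  have := qPochInf_pos hQ0.le hQ1 (Real.rpow_lt_one hQ0.le hQ1 hx)
  have : 0 < 1 - Q := sub_pos.mpr hQ1
  positivity

lemma qGamma_add_nat_mul {x : ℝ} (hx : 0 < x) (n : ℕ) :
    qGamma Q (x + n) * (1 - Q) ^ n = qGamma Q x * qPoch (Q ^ x) Q n := by
  have hQ : |Q| < 1 := abs_lt.mpr ⟨by linarith, hQ1⟩
  have h1Q : 0 < 1 - Q := sub_pos.mpr hQ1
  have hxn : 0 < x + n := by positivity
  have hpow : (1 - Q) ^ (1 - (x + n)) * (1 - Q) ^ n = (1 - Q) ^ (1 - x) := by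
    rw [← Real.rpow_natCast, ← Real.rpow_add h1Q]
    ring_nf
  have hQxn : Q ^ x * Q ^ n = Q ^ (x + n) := by rw [Real.rpow_add hQ0, Real.rpow_natCast]
  have hPn := qPochInf_pos hQ0.le hQ1 (Real.rpow_lt_one hQ0.le hQ1 hxn)
  have hpoch := qPoch_pos hQ0.le hQ1.le (Real.rpow_lt_one hQ0.le hQ1 hx) n
  rw [qGamma_eq_qPochInf hQ0 hQ1 hxn, qGamma_eq_qPochInf hQ0 hQ1 hx,
    qPochInf_eq_qPoch_mul hQ (Q ^ x) n, hQxn, ← hpow]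
  field_simp

lemma qPoch_eq_qGamma_div {x : ℝ} (hx : 0 < x) (n : ℕ) :
    qPoch (Q ^ x) Q n = qGamma Q (x + n) * (1 - Q) ^ n / qGamma Q x := by
  rw [eq_div_iff (qGamma_pos hQ0 hQ1 hx).ne', qGamma_add_nat_mul hQ0 hQ1 hx, mul_comm]

lemma qGamma_add_one {x : ℝ} (hx : 0 < x) : qGamma Q (x + 1) = qNum Q x * qGamma Q x := by
  have h := qGamma_add_nat_mul hQ0 hQ1 hx 1
  rw [Nat.cast_one, pow_one, qPoch, Finset.prod_range_one, pow_zero, mul_one] at h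
  rw [qNum_eq_one_sub_div, div_mul_eq_mul_div, eq_div_iff (sub_pos.mpr hQ1).ne', h, mul_comm]

lemma summable_norm_qBessel1_series {ν : ℝ} (hν : -1 < ν) {w : ℝ} (hw : (1 - Q) ^ 2 * |w| < 1) :
    Summable fun i : ℕ => ‖(-1) ^ i / (qFact Q i * qGamma Q (i + ν + 1)) * w ^ i‖ := by
  set c : ℕ → ℝ := fun i => (-1) ^ i / (qFact Q i * qGamma Q (i + ν + 1))
  have harg : ∀ i : ℕ, 0 < (i : ℝ) + ν + 1 := fun i => by
    have := Nat.cast_nonneg (α := ℝ) i; linarith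
  have hden : ∀ i : ℕ, 0 < qFact Q i * qGamma Q (i + ν + 1) := fun i =>
    mul_pos (qFact_pos hQ0 hQ1 i) (qGamma_pos hQ0 hQ1 (harg i))
  have hnorm : ∀ i, ‖c i‖ = (qFact Q i * qGamma Q (i + ν + 1))⁻¹ := fun i => by
    rw [norm_div, norm_pow, norm_neg, norm_one, one_pow, one_div, Real.norm_of_nonneg (hden i).le]
  have hratio : ∀ i : ℕ, ‖c (i + 1)‖ / ‖c i‖ = (qNum Q (i + 1) * qNum Q (i + ν + 1))⁻¹ :=
    fun i => by
      have hΓ := qGamma_add_one hQ0 hQ1 (harg i)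
      have h1 := qNum_pos hQ0 hQ1 (y := (i : ℝ) + 1) (by positivity)
      have h2 := qNum_pos hQ0 hQ1 (harg i)
      rw [hnorm, hnorm, qFact_succ, Nat.cast_succ,
        show (i : ℝ) + 1 + ν + 1 = i + ν + 1 + 1 by ring, hΓ]
      have := qFact_pos hQ0 hQ1 i
      have := qGamma_pos hQ0 hQ1 (harg i)
      field_simp
  have hlim : Tendsto (fun i => ‖c (i + 1)‖ / ‖c i‖) atTop (𝓝 ((1 - Q) ^ 2)) := by
    have h1Q : (1 - Q)⁻¹ ≠ 0 := inv_ne_zero (sub_pos.mpr hQ1).ne'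
    have := ((tendsto_qNum_nat_add hQ0 hQ1 1).mul
      (tendsto_qNum_nat_add hQ0 hQ1 (ν + 1))).inv₀ (mul_ne_zero h1Q h1Q)
    rw [← mul_inv, inv_inv, ← sq] at this
    simp only [← add_assoc] at this
    exact this.congr fun i => (hratio i).symm
  refine summable_norm_mul_pow_of_tendsto_ratio (fun i => ?_) hlim (by rwa [Real.norm_eq_abs])
  exact div_ne_zero (pow_ne_zero _ (neg_ne_zero.mpr one_ne_zero)) (hden i).ne'

lemma summable_norm_qExpE_series (z : ℝ) :
    Summable fun j : ℕ => ‖Q ^ (j * (j - 1) / 2) * z ^ j / qFact Q j‖ := by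
  set c : ℕ → ℝ := fun j => Q ^ (j * (j - 1) / 2) / qFact Q j
  have hc : ∀ j, 0 < c j := fun j => div_pos (pow_pos hQ0 _) (qFact_pos hQ0 hQ1 j)
  have hratio : ∀ j : ℕ, ‖c (j + 1)‖ / ‖c j‖ = Q ^ j / qNum Q (j + 1) := fun j => by
    have h1 := qNum_pos hQ0 hQ1 (y := (j : ℝ) + 1) (by positivity)
    have h2 := qFact_pos hQ0 hQ1 j
    rw [Real.norm_of_nonneg (hc _).le, Real.norm_of_nonneg (hc _).le]
    simp only [c]
    rw [Nat.triangle_succ, qFact_succ, pow_add]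
    field_simp
  have hlim : Tendsto (fun j => ‖c (j + 1)‖ / ‖c j‖) atTop (𝓝 0) := by
    have := (tendsto_pow_atTop_nhds_zero_of_lt_one hQ0.le hQ1).div
      (tendsto_qNum_nat_add hQ0 hQ1 1) (inv_ne_zero (sub_pos.mpr hQ1).ne')
    rw [zero_div] at this
    exact this.congr fun j => (hratio j).symm
  simpa only [c, mul_div_right_comm] using
    summable_norm_mul_pow_of_tendsto_ratio (fun j => (hc j).ne') hlim (w := z) (by simp)

lemma qExpE_pos {z : ℝ} (hz : 0 ≤ z) : 0 < qExpE Q z := by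
  have hterm : ∀ j : ℕ, 0 ≤ Q ^ (j * (j - 1) / 2) * z ^ j / qFact Q j := fun j =>
    div_nonneg (by positivity) (qFact_pos hQ0 hQ1 j).le
  have hle := (summable_norm_qExpE_series hQ0 hQ1 z).of_norm.le_tsum 0 fun j _ => hterm j
  simp only [qFact, Finset.range_zero, Finset.prod_empty, pow_zero, div_one, zero_mul,
    Nat.zero_div, mul_one] at hle
  exact one_pos.trans_le hle

end

lemma sq_pow_triangle_mul_pow (q x : ℝ) (m : ℕ) :
    (q ^ 2) ^ (m * (m - 1) / 2) * (q ^ 2 * x) ^ m = q ^ (m * (m + 1)) * x ^ m := by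
  rw [mul_pow, ← pow_mul, ← pow_mul, ← mul_assoc, ← pow_add,
    Nat.two_mul_div_two_of_even (Nat.even_mul_pred_self m)]
  congr 2
  cases m
  · rfl
  · rw [Nat.add_sub_cancel]
    ring

lemma qLaguerre_div_qGamma_mul_pow {q α : ℝ} (hq0 : 0 < q) (hq1 : q < 1) (hα : -1 < α)
    (u x : ℝ) (j : ℕ) :
    qLaguerre q α j u / qGamma (q ^ 2) (α + j + 1) * x ^ j =
      ∑ i ∈ Finset.range (j + 1),
        (-1) ^ i / (qFact (q ^ 2) i * qGamma (q ^ 2) (i + α + 1)) * (u * x) ^ i *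
          ((q ^ 2) ^ ((j - i) * (j - i - 1) / 2) * (q ^ 2 * x) ^ (j - i) /
            qFact (q ^ 2) (j - i)) := by
  have hQ0 : 0 < q ^ 2 := by positivity
  have hQ1 : q ^ 2 < 1 := by nlinarith
  rw [qLaguerre, Finset.sum_div, Finset.sum_mul]
  refine Finset.sum_congr rfl fun i hi => ?_
  obtain ⟨m, rfl⟩ : ∃ m, j = i + m := ⟨j - i, by grind⟩
  have harg : 0 < (i : ℝ) + α + 1 := by have := Nat.cast_nonneg (α := ℝ) i; linarith
  have hbase : q ^ (2 * (i : ℝ) + 2 * α + 2) = (q ^ 2) ^ ((i : ℝ) + α + 1) := by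
    rw [← Real.rpow_natCast, ← Real.rpow_mul hq0.le]
    ring_nf
  have hcast : α + ((i + m : ℕ) : ℝ) + 1 = (i : ℝ) + α + 1 + m := by push_cast; ring
  rw [Nat.add_sub_cancel_left, sq_pow_triangle_mul_pow, hbase,
    qPoch_eq_qGamma_div hQ0 hQ1 harg, hcast, mul_pow, pow_add, neg_pow]
  have := qGamma_pos hQ0 hQ1 harg
  have := qGamma_pos hQ0 hQ1 (x := (i : ℝ) + α + 1 + m) (by positivity)
  have := qFact_pos hQ0 hQ1 i
  have := qFact_pos hQ0 hQ1 m
  have : (1 - q ^ 2) ^ m ≠ 0 := pow_ne_zero _ (sub_pos.mpr hQ1).ne'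
  field_simp

/-- generating function for the q-Laguerre polynomials `𝓛^{(α)}_j(·|q²)`:
for `α > -1` and `r, t > 0` with `rt < 1/(1-q)`, the series converges absolutely and
`J^{(1)}_α(rt|q²) = (rt/(1+q))^α · [∑_j 𝓛^{(α)}_j(r²/(1+q)|q²)/Γ_{q²}(α+j+1) · t^{2j}/(1+q)^j]
  · e_{q²}(-q²t²/(1+q))`. -/
theorem qBessel1_generating (q : ℝ) (hq0 : 0 < q) (hq1 : q < 1)
    (α : ℝ) (hα : α > -1) (r t : ℝ) (hr : 0 < r) (ht : 0 < t)
    (hrt : r * t < 1 / (1 - q)) :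
    Summable (fun j : ℕ =>
      qLaguerre q α j (r ^ 2 / (1 + q)) / qGamma (q ^ 2) (α + (j : ℝ) + 1) *
        (t ^ (2 * j) / (1 + q) ^ j)) ∧
    qBessel1 q α (r * t) =
      (r * t / (1 + q)) ^ α *
        (∑' j : ℕ, qLaguerre q α j (r ^ 2 / (1 + q)) / qGamma (q ^ 2) (α + (j : ℝ) + 1) *
          (t ^ (2 * j) / (1 + q) ^ j)) *
        qExpe (q ^ 2) (q ^ 2 * t ^ 2 / (1 + q)) := by
  have hQ0 : 0 < q ^ 2 := by positivity
  have hQ1 : q ^ 2 < 1 := by nlinarith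
  set a : ℕ → ℝ := fun i =>
    (-1) ^ i / (qFact (q ^ 2) i * qGamma (q ^ 2) (i + α + 1)) * ((r * t / (1 + q)) ^ 2) ^ i
  set e : ℕ → ℝ := fun k =>
    (q ^ 2) ^ (k * (k - 1) / 2) * (q ^ 2 * t ^ 2 / (1 + q)) ^ k / qFact (q ^ 2) k
  have hterm : ∀ j : ℕ, qLaguerre q α j (r ^ 2 / (1 + q)) / qGamma (q ^ 2) (α + j + 1) *
      (t ^ (2 * j) / (1 + q) ^ j) = ∑ i ∈ Finset.range (j + 1), a i * e (j - i) := fun j => by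
    rw [pow_mul, ← div_pow, qLaguerre_div_qGamma_mul_pow hq0 hq1 hα]
    simp only [a, e, mul_div_assoc,
      show r ^ 2 / (1 + q) * (t ^ 2 / (1 + q)) = (r * t / (1 + q)) ^ 2 by ring]
  have ha : Summable fun i => ‖a i‖ := by
    refine summable_norm_qBessel1_series hQ0 hQ1 hα ?_
    have hrt1 : (1 - q) * (r * t) < 1 := by rwa [lt_div_iff₀ (sub_pos.mpr hq1), mul_comm] at hrt
    have hrt0 : 0 < (1 - q) * (r * t) := by have := sub_pos.mpr hq1; positivity
    calc (1 - q ^ 2) ^ 2 * |(r * t / (1 + q)) ^ 2| = ((1 - q) * (r * t)) ^ 2 := by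
          rw [abs_of_nonneg (sq_nonneg _)]; field_simp; ring
      _ < 1 := pow_lt_one₀ hrt0.le hrt1 two_ne_zero
  have he : Summable fun k => ‖e k‖ := summable_norm_qExpE_series hQ0 hQ1 _
  have hE : qExpE (q ^ 2) (q ^ 2 * t ^ 2 / (1 + q)) = ∑' k, e k := rfl
  have hE0 : 0 < ∑' k, e k := hE ▸ qExpE_pos hQ0 hQ1 (by positivity)
  have hJ : qBessel1 q α (r * t) = (r * t / (1 + q)) ^ α * ∑' i, a i := by
    simp only [qBessel1, a, pow_mul]
  refine ⟨(summable_norm_sum_mul_range_of_summable_norm ha he).of_norm.congr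
    fun j => (hterm j).symm, ?_⟩
  rw [tsum_congr hterm, ← tsum_mul_tsum_eq_tsum_sum_range_of_summable_norm ha he, hJ, qExpe, hE]
  field_simp
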